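/- Let J : ℝⁿ × ℝᵏ → ℝ be continuous and let (xₙ, zₙ) be a sequence generated by exact alternate minimization whose energy values converge. Then every accumulation point (x*, z*) of the sequence is a partial optimum, i.e., J(x*, z*) ≤ J(x, z*) for all x and J(x*, z*) ≤ J(x*, z) for all z. -/

import Mathlib

/-!
Both optimality conditions are closed conditions on the pair `(x, z)`, so they pass to cluster
points as soon as they hold along the sequence up to an error tending to zero. The condition in
`x` holds exactly from the second iterate on. For `z`, the two minimisation steps give
`J (x (m+1)) (z (m+1)) ≤ J (x m) (z (m+1)) ≤ J (x m) z'`, so the condition holds up to the energy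
decrease `J (x m) (z m) - J (x (m+1)) (z (m+1))`, which tends to zero because the energies converge.
-/

open Filter Topology

theorem le_of_mapClusterPt_of_eventually_le_add {α X : Type*} [TopologicalSpace X]
    {l : Filter α} {f g : X → ℝ} (hf : Continuous f) (hg : Continuous g) {u : α → X} {p : X}
    (hp : MapClusterPt p l u) {δ : α → ℝ} (hδ : Tendsto δ l (𝓝 0))
    (h : ∀ᶠ a in l, f (u a) ≤ g (u a) + δ a) : f p ≤ g p := by
  refine le_of_forall_pos_le_add fun ε hε => ?_
  have hδε : ∀ᶠ a in l, δ a ≤ ε := hδ.eventually (ge_mem_nhds hε)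
  exact (isClosed_le hf (hg.add continuous_const)).mem_of_mapClusterPt hp <|
    (h.and hδε).mono fun a ⟨hfg, hδa⟩ => hfg.trans (by simpa using hδa)

/-- Accumulation points of alternate minimization are partial optima. -/
theorem altmin_accumulation_partial_optimum {n k : ℕ}
    (J : (Fin n → ℝ) → (Fin k → ℝ) → ℝ)
    (hJ : Continuous (fun p : (Fin n → ℝ) × (Fin k → ℝ) => J p.1 p.2))
    (x : ℕ → (Fin n → ℝ)) (z : ℕ → (Fin k → ℝ))
    (hz : ∀ m, ∀ z' : Fin k → ℝ, J (x m) (z (m + 1)) ≤ J (x m) z')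
    (hx : ∀ m, ∀ x' : Fin n → ℝ, J (x (m + 1)) (z (m + 1)) ≤ J x' (z (m + 1)))
    (L : ℝ) (hL : Tendsto (fun m => J (x m) (z m)) atTop (nhds L))
    (xs : Fin n → ℝ) (zs : Fin k → ℝ)
    (hacc : MapClusterPt (xs, zs) atTop (fun m => (x m, z m))) :
    (∀ x' : Fin n → ℝ, J xs zs ≤ J x' zs) ∧ (∀ z' : Fin k → ℝ, J xs zs ≤ J xs z') := by
  have hdecrease : Tendsto (fun m => J (x m) (z m) - J (x (m + 1)) (z (m + 1))) atTop (𝓝 0) := by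
    simpa using hL.sub (hL.comp (tendsto_add_atTop_nat 1))
  have hJ_snd (x' : Fin n → ℝ) : Continuous fun p : (Fin n → ℝ) × (Fin k → ℝ) => J x' p.2 :=
    hJ.comp (continuous_const.prodMk continuous_snd)
  have hJ_fst (z' : Fin k → ℝ) : Continuous fun p : (Fin n → ℝ) × (Fin k → ℝ) => J p.1 z' :=
    hJ.comp (continuous_fst.prodMk continuous_const)
  constructor
  · intro x'
    refine le_of_mapClusterPt_of_eventually_le_add hJ (hJ_snd x') hacc tendsto_const_nhds ?_
    filter_upwards [eventually_ge_atTop 1] with m hm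
    obtain ⟨m, rfl⟩ := Nat.exists_eq_add_of_le' hm
    simpa using hx m x'
  · intro z'
    refine le_of_mapClusterPt_of_eventually_le_add hJ (hJ_fst z') hacc hdecrease ?_
    exact .of_forall fun m => by linarith [hx m (x m), hz m z']
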